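/- arXiv:2309.13728 — 2 statements merged into one kernel-verified Lean document; each statement's English description precedes it below -/
import Mathlib

section
/- Fix reals A₁, A₂ > 0 with A₁ ≠ A₂ and A₃ > 2 A₁² A₂² / ((A₁ − A₂)² (A₁ + A₂)). Consider the weighted graph on vertex set ℤ² whose (undirected) edges are, for each x ∈ ℤ² with x₁ + x₂ even: edges {x, x−e₁} and {x, x−e₂} with weight A₁; edges {x, x+e₁} and {x, x+e₂} with weight A₂; edges {x, x+(2,2)} and {x, x−(2,2)} with weight A₃; and edges {x, x+(1,1)} and {x, x−(1,1)} with weight A₄, where e₁ = (1,0), e₂ = (0,1). Then there exists A₄ > 0 such that the function h : ℤ² → ℝ defined by h(x₁, x₂) = (−A₂/A₁)^{x₁} if x₁ = x₂ and h(x₁, x₂) = 0 otherwise, satisfies Δh(u) = 0 for every u ∈ ℤ², where Δh(u) = Σ_{w ~ u} a(u,w)(h(u) − h(w)) is the weighted Laplacian of this graph. In particular h is a nonzero harmonic function supported on the diagonal {x₁ = x₂}. -/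
/-- The vertex set of the square lattice. -/
abbrev Z2 := ℤ × ℤ

/-- The edge weights declared at a vertex `x` with `x₁ + x₂` even:
`a(x, x-e₁) = a(x, x-e₂) = A₁`, `a(x, x+e₁) = a(x, x+e₂) = A₂`,
`a(x, x±(2,2)) = A₃`, `a(x, x±(1,1)) = A₄`; all other pairs get weight `0`. -/
noncomputable def declaredWt (A1 A2 A3 A4 : ℝ) (x w : Z2) : ℝ :=
  if w = x - (1, 0) ∨ w = x - (0, 1) then A1
  else if w = x + (1, 0) ∨ w = x + (0, 1) then A2
  else if w = x + (2, 2) ∨ w = x - (2, 2) then A3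
  else if w = x + (1, 1) ∨ w = x - (1, 1) then A4
  else 0

/-- The full symmetric edge-weight function: edges are declared only at vertices with even
coordinate sum; pairs of vertices with both coordinate sums odd are non-adjacent. -/
noncomputable def awt (A1 A2 A3 A4 : ℝ) (u w : Z2) : ℝ :=
  if Even (u.1 + u.2) then declaredWt A1 A2 A3 A4 u w
  else if Even (w.1 + w.2) then declaredWt A1 A2 A3 A4 w u
  else 0

/-- The offsets to all possible neighbors of a vertex in this graph
(non-edges among them carry weight `0`). -/
def offs : List Z2 :=
  [(1, 0), (-1, 0), (0, 1), (0, -1), (1, 1), (-1, -1), (2, 2), (-2, -2)]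

/-- The weighted graph Laplacian `Δh(u) = Σ_{w ~ u} a(u,w)(h(u) - h(w))` of this graph. -/
noncomputable def lapW (A1 A2 A3 A4 : ℝ) (h : Z2 → ℝ) (u : Z2) : ℝ :=
  (offs.map (fun d => awt A1 A2 A3 A4 u (u + d) * (h u - h (u + d)))).sum

/-!
Along the diagonal the declared weights see `h` only through the edges `x ± (1,1)` and
`x ± (2,2)`, and off it only the two diagonal neighbours of the vertices `(n, n+1)` and
`(n+1, n)`. With `r = -A₂/A₁` the latter give `A₁ r + A₂ = 0`, while harmonicity at a
diagonal vertex is one linear equation in `A₄`; its solution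
`A₄ = A₃ (A₁-A₂)²/(A₁A₂) - 2A₁A₂/(A₁+A₂)` is positive exactly under the bound on `A₃`.
-/

lemma declaredWt_add_right (A1 A2 A3 A4 : ℝ) (u d : Z2) :
    declaredWt A1 A2 A3 A4 u (u + d) = declaredWt A1 A2 A3 A4 0 d := by
  simp [declaredWt, sub_eq_add_neg, add_right_inj]

lemma lapW_of_even (A1 A2 A3 A4 : ℝ) (h : Z2 → ℝ) {x y : ℤ} (hpar : Even (x + y)) :
    lapW A1 A2 A3 A4 h (x, y) =
      A2 * (h (x, y) - h (x + 1, y)) + A1 * (h (x, y) - h (x - 1, y)) +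
      A2 * (h (x, y) - h (x, y + 1)) + A1 * (h (x, y) - h (x, y - 1)) +
      A4 * (h (x, y) - h (x + 1, y + 1)) + A4 * (h (x, y) - h (x - 1, y - 1)) +
      A3 * (h (x, y) - h (x + 2, y + 2)) + A3 * (h (x, y) - h (x - 2, y - 2)) := by
  have hwt : ∀ d : Z2, awt A1 A2 A3 A4 (x, y) ((x, y) + d) = declaredWt A1 A2 A3 A4 0 d := by
    intro d
    simp [awt, hpar, declaredWt_add_right]
  simp only [lapW, offs, List.map_cons, List.map_nil, List.sum_cons, List.sum_nil, hwt,
    Prod.mk_add_mk]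
  norm_num [declaredWt, Prod.ext_iff, ← sub_eq_add_neg]
  ring

lemma lapW_of_not_even (A1 A2 A3 A4 : ℝ) (h : Z2 → ℝ) {x y : ℤ} (hpar : ¬Even (x + y)) :
    lapW A1 A2 A3 A4 h (x, y) =
      A1 * (h (x, y) - h (x + 1, y)) + A2 * (h (x, y) - h (x - 1, y)) +
      A1 * (h (x, y) - h (x, y + 1)) + A2 * (h (x, y) - h (x, y - 1)) := by
  have hodd : Odd (x + y) := Int.not_even_iff_odd.mp hpar
  -- an odd vertex only carries the edges declared at its even neighbours
  have hwt : ∀ d : Z2, awt A1 A2 A3 A4 (x, y) ((x, y) + d) =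
      if Even (d.1 + d.2) then 0 else declaredWt A1 A2 A3 A4 0 (-d) := by
    intro d
    have hshift : x + d.1 + (y + d.2) = (x + y) + (d.1 + d.2) := by ring
    have hback := declaredWt_add_right A1 A2 A3 A4 ((x, y) + d) (-d)
    rw [add_neg_cancel_right] at hback
    by_cases hd : Even (d.1 + d.2)
    · have : ¬Even (x + d.1 + (y + d.2)) := by
        rw [hshift, Int.not_even_iff_odd]; exact hodd.add_even hd
      simp [awt, hpar, hd, this]
    · have : Even (x + d.1 + (y + d.2)) := by
        rw [hshift]; exact hodd.add_odd (Int.not_even_iff_odd.mp hd)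
      simp [awt, hpar, hd, this, hback]
  simp only [lapW, offs, List.map_cons, List.map_nil, List.sum_cons, List.sum_nil, hwt,
    Prod.mk_add_mk]
  norm_num [declaredWt, Prod.ext_iff, ← sub_eq_add_neg]
  ring

lemma lapW_eq_zero_of_vanish (A1 A2 A3 A4 : ℝ) {h : Z2 → ℝ} {u : Z2} (hu : h u = 0)
    (hnbr : ∀ d ∈ offs, h (u + d) = 0) : lapW A1 A2 A3 A4 h u = 0 := by
  refine List.sum_eq_zero fun t ht => ?_
  obtain ⟨d, hd, rfl⟩ := List.mem_map.mp ht
  rw [hu, hnbr d hd, sub_zero, mul_zero]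

noncomputable def diagWave (r : ℝ) (x : Z2) : ℝ := if x.1 = x.2 then r ^ x.1 else 0

@[simp] lemma diagWave_diag (r : ℝ) (n : ℤ) : diagWave r (n, n) = r ^ n := if_pos rfl

lemma diagWave_of_ne (r : ℝ) {x y : ℤ} (hxy : x ≠ y) : diagWave r (x, y) = 0 := if_neg hxy

section diagWave

variable {r : ℝ}

lemma diagWave_ne_zero : diagWave r ≠ 0 := fun h => by
  simpa using congrFun h (0, 0)

lemma lapW_diagWave_diag (A1 A2 A3 A4 : ℝ) (hr : r ≠ 0) (n : ℤ) :
    lapW A1 A2 A3 A4 (diagWave r) (n, n) =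
      r ^ n * (2 * (A1 + A2) + A4 * (2 - r - r⁻¹) + A3 * (2 - r ^ 2 - r⁻¹ ^ 2)) := by
  rw [lapW_of_even _ _ _ _ _ ⟨n, rfl⟩, diagWave_of_ne r (show n + 1 ≠ n by omega),
    diagWave_of_ne r (show n - 1 ≠ n by omega), diagWave_of_ne r (show n ≠ n + 1 by omega),
    diagWave_of_ne r (show n ≠ n - 1 by omega)]
  simp only [diagWave_diag, zpow_add₀ hr, zpow_sub₀ hr, zpow_ofNat]
  field_simp
  ring

lemma lapW_diagWave_above (A1 A2 A3 A4 : ℝ) (hr : r ≠ 0) (n : ℤ) :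
    lapW A1 A2 A3 A4 (diagWave r) (n, n + 1) = -r ^ n * (A1 * r + A2) := by
  rw [lapW_of_not_even _ _ _ _ _ (by rw [Int.not_even_iff_odd]; exact ⟨n, by ring⟩),
    add_sub_cancel_right, diagWave_of_ne r (show n ≠ n + 1 by omega),
    diagWave_of_ne r (show n - 1 ≠ n + 1 by omega), diagWave_of_ne r (show n ≠ n + 1 + 1 by omega)]
  simp only [diagWave_diag, zpow_add_one₀ hr]
  ring

lemma lapW_diagWave_below (A1 A2 A3 A4 : ℝ) (hr : r ≠ 0) (n : ℤ) :
    lapW A1 A2 A3 A4 (diagWave r) (n + 1, n) = -r ^ n * (A1 * r + A2) := by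
  rw [lapW_of_not_even _ _ _ _ _ (by rw [Int.not_even_iff_odd]; exact ⟨n, by ring⟩),
    add_sub_cancel_right, diagWave_of_ne r (show n + 1 ≠ n by omega),
    diagWave_of_ne r (show n + 1 + 1 ≠ n by omega), diagWave_of_ne r (show n + 1 ≠ n - 1 by omega)]
  simp only [diagWave_diag, zpow_add_one₀ hr]
  ring

lemma lapW_diagWave_far (A1 A2 A3 A4 : ℝ) {x y : ℤ} (h0 : x ≠ y) (h1 : y ≠ x + 1)
    (h2 : x ≠ y + 1) : lapW A1 A2 A3 A4 (diagWave r) (x, y) = 0 := by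
  refine lapW_eq_zero_of_vanish _ _ _ _ (diagWave_of_ne r h0) fun d hd => ?_
  simp only [offs, List.mem_cons, List.not_mem_nil, or_false] at hd
  rcases hd with rfl | rfl | rfl | rfl | rfl | rfl | rfl | rfl <;>
    exact diagWave_of_ne r (by omega)

theorem lapW_diagWave_eq_zero {A1 A2 A3 A4 : ℝ} (hr : r ≠ 0) (hoff : A1 * r + A2 = 0)
    (hdiag : 2 * (A1 + A2) + A4 * (2 - r - r⁻¹) + A3 * (2 - r ^ 2 - r⁻¹ ^ 2) = 0) (u : Z2) :
    lapW A1 A2 A3 A4 (diagWave r) u = 0 := by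
  obtain ⟨x, y⟩ := u
  by_cases h0 : x = y
  · rw [h0, lapW_diagWave_diag _ _ _ _ hr, hdiag, mul_zero]
  by_cases h1 : y = x + 1
  · rw [h1, lapW_diagWave_above _ _ _ _ hr, hoff, mul_zero]
  by_cases h2 : x = y + 1
  · rw [h2, lapW_diagWave_below _ _ _ _ hr, hoff, mul_zero]
  exact lapW_diagWave_far _ _ _ _ h0 h1 h2

end diagWave

/-- **A non-planar counterexample on the square lattice.**
For positive `A₁ ≠ A₂` and `A₃ > 2A₁²A₂²/((A₁-A₂)²(A₁+A₂))` there is `A₄ > 0` such that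
`h(x₁,x₂) = (-A₂/A₁)^{x₁} 1_{x₁ = x₂}` is harmonic on `(ℤ², 𝓔(A₁,A₂,A₃,A₄))`; in
particular `h` is a nonzero harmonic function supported on the diagonal `{x₁ = x₂}`. -/
theorem nonplanar_counterexample (A1 A2 A3 : ℝ)
    (hA1 : 0 < A1) (hA2 : 0 < A2) (hne : A1 ≠ A2)
    (hA3 : 2 * A1 ^ 2 * A2 ^ 2 / ((A1 - A2) ^ 2 * (A1 + A2)) < A3) :
    ∃ A4 : ℝ, 0 < A4 ∧
      (∀ u : Z2,
        lapW A1 A2 A3 A4 (fun x => if x.1 = x.2 then (-A2 / A1) ^ x.1 else 0) u = 0) ∧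
      (fun x : Z2 => if x.1 = x.2 then (-A2 / A1) ^ x.1 else (0 : ℝ)) ≠ (fun _ => 0) ∧
      (∀ x : Z2, x.1 ≠ x.2 →
        (if x.1 = x.2 then (-A2 / A1) ^ x.1 else (0 : ℝ)) = 0) := by
  have hsum : 0 < A1 + A2 := add_pos hA1 hA2
  have hgap : 0 < (A1 - A2) ^ 2 * (A1 + A2) := by
    have := sub_ne_zero.mpr hne
    positivity
  have hA4 : 0 < A3 * (A1 - A2) ^ 2 / (A1 * A2) - 2 * A1 * A2 / (A1 + A2) := by
    have := (div_lt_iff₀ hgap).mp hA3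
    rw [div_sub_div _ _ (by positivity) hsum.ne']
    exact div_pos (by nlinarith) (by positivity)
  have hr : -A2 / A1 ≠ 0 := div_ne_zero (neg_ne_zero.mpr hA2.ne') hA1.ne'
  refine ⟨_, hA4, lapW_diagWave_eq_zero hr ?_ ?_, diagWave_ne_zero,
    fun x hx => diagWave_of_ne _ hx⟩
  · field_simp
    ring
  · field_simp
    ring
end

section
/- Let c = 3 + 2√2 (so that c + c⁻¹ = 6). The function f : ℤ³ → ℝ defined by f(x, y, z) = (−1)^x · c^z if x = y and f(x, y, z) = 0 otherwise, satisfies Δf(u) = 0 for every u ∈ ℤ³, where Δf(u) = Σ_{v : |v−u|₁ = 1} (f(u) − f(v)) is the unit-conductance Laplacian on ℤ³. In particular, f is a nonconstant harmonic function on ℤ³ that vanishes outside the set {(x,y,z) : x = y}. -/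
/-!
Write `f(x, y, z) = g(x, y) · c^z` with `g(x, y) = (-1)^x 1_{x = y}`. The planar Laplacian of `g`
is `4 g`: a point next to the diagonal has two diagonal neighbours, carrying opposite signs. The
vertical Laplacian of `c^z` is `(2 - c - c⁻¹) c^z = -4 c^z`, and the two contributions cancel.
-/

/-- The vertex set of the cubic lattice `ℤ³`. -/
abbrev Z3 := ℤ × ℤ × ℤ

/-- The six nearest neighbors of a point of `ℤ³`. -/
def nbrs3 (u : Z3) : List Z3 :=
  [(u.1 + 1, u.2.1, u.2.2), (u.1 - 1, u.2.1, u.2.2),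
   (u.1, u.2.1 + 1, u.2.2), (u.1, u.2.1 - 1, u.2.2),
   (u.1, u.2.1, u.2.2 + 1), (u.1, u.2.1, u.2.2 - 1)]

/-- The unit-conductance graph Laplacian on `ℤ³`:
`Δf(u) = Σ_{|v-u|₁ = 1} (f(u) - f(v))`. -/
noncomputable def lap3 (f : Z3 → ℝ) (u : Z3) : ℝ :=
  ((nbrs3 u).map (fun v => f u - f v)).sum

def lap1 (h : ℤ → ℝ) (z : ℤ) : ℝ := 2 * h z - h (z + 1) - h (z - 1)

def lap2 (g : ℤ → ℤ → ℝ) (x y : ℤ) : ℝ :=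
  4 * g x y - g (x + 1) y - g (x - 1) y - g x (y + 1) - g x (y - 1)

theorem lap3_mul (g : ℤ → ℤ → ℝ) (h : ℤ → ℝ) (u : Z3) :
    lap3 (fun w => g w.1 w.2.1 * h w.2.2) u =
      lap2 g u.1 u.2.1 * h u.2.2 + g u.1 u.2.1 * lap1 h u.2.2 := by
  simp only [lap3, nbrs3, lap2, lap1, List.map_cons, List.map_nil, List.sum_cons, List.sum_nil]
  ring

theorem lap1_zpow {c : ℝ} (hc : c ≠ 0) (z : ℤ) :
    lap1 (fun z => c ^ z) z = (2 - (c + c⁻¹)) * c ^ z := by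
  rw [lap1, zpow_add_one₀ hc, zpow_sub_one₀ hc]
  ring

theorem lap2_diagonal {s : ℤ → ℝ} (hs : Function.Antiperiodic s 1) (x y : ℤ) :
    lap2 (fun x y => if x = y then s x else 0) x y = 4 * if x = y then s x else 0 := by
  simp only [lap2]
  rcases eq_or_ne x y with rfl | hxy
  · simp (disch := omega) [if_neg]
  rcases eq_or_ne y (x + 1) with rfl | h1
  · simp (disch := omega) [if_neg, hs x]
  rcases eq_or_ne x (y + 1) with rfl | h2
  · simp (disch := omega) [if_neg, hs y]
  simp (disch := omega) [if_neg]

theorem antiperiodic_neg_one_zpow : Function.Antiperiodic (fun x : ℤ => (-1 : ℝ) ^ x) 1 := by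
  intro x
  simp [zpow_add_one₀]

theorem three_add_two_sqrt_two_add_inv : (3 + 2 * √2 : ℝ) + (3 + 2 * √2)⁻¹ = 6 := by
  have hinv : (3 + 2 * √2 : ℝ)⁻¹ = 3 - 2 * √2 := by
    refine inv_eq_of_mul_eq_one_right ?_
    linear_combination (-4 : ℝ) * Real.sq_sqrt (show (0:ℝ) ≤ 2 by norm_num)
  rw [hinv]
  ring

theorem lap3_diagonal_mul_zpow_eq_zero {s : ℤ → ℝ} (hs : Function.Antiperiodic s 1) {c : ℝ}
    (hc : c + c⁻¹ = 6) (u : Z3) :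
    lap3 (fun w => (if w.1 = w.2.1 then s w.1 else 0) * c ^ w.2.2) u = 0 := by
  have hc0 : c ≠ 0 := by
    rintro rfl
    norm_num at hc
  rw [lap3_mul (fun x y => if x = y then s x else 0) (fun z => c ^ z), lap2_diagonal hs,
    lap1_zpow hc0, hc]
  ring

/-- **A harmonic function on ℤ³ which is bounded outside a plane.**
With `c = 3 + 2√2` (so that `c + c⁻¹ = 6`), the function
`f(x,y,z) = (-1)^x c^z 1_{x = y}` is harmonic on `ℤ³` for the unit-conductance Laplacian;
in particular it is a nonconstant harmonic function vanishing outside `{x = y}`. -/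
theorem counterexample_Z3 :
    (3 + 2 * Real.sqrt 2) + (3 + 2 * Real.sqrt 2)⁻¹ = 6 ∧
    (∀ u : Z3, lap3 (fun w : Z3 =>
        if w.1 = w.2.1 then (-1 : ℝ) ^ w.1 * (3 + 2 * Real.sqrt 2) ^ w.2.2 else 0) u = 0) ∧
    (∃ u v : Z3,
        (if u.1 = u.2.1 then (-1 : ℝ) ^ u.1 * (3 + 2 * Real.sqrt 2) ^ u.2.2 else 0) ≠
        (if v.1 = v.2.1 then (-1 : ℝ) ^ v.1 * (3 + 2 * Real.sqrt 2) ^ v.2.2 else 0)) ∧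
    (∀ u : Z3, u.1 ≠ u.2.1 →
        (if u.1 = u.2.1 then (-1 : ℝ) ^ u.1 * (3 + 2 * Real.sqrt 2) ^ u.2.2 else (0:ℝ)) = 0) := by
  have hf : (fun w : Z3 =>
      if w.1 = w.2.1 then (-1 : ℝ) ^ w.1 * (3 + 2 * Real.sqrt 2) ^ w.2.2 else 0) =
      fun w => (if w.1 = w.2.1 then (-1 : ℝ) ^ w.1 else 0) * (3 + 2 * Real.sqrt 2) ^ w.2.2 := by
    funext w
    rw [ite_mul, zero_mul]
  refine ⟨three_add_two_sqrt_two_add_inv, fun u => ?_, ⟨(0, 0, 0), (1, 0, 0), by norm_num⟩,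
    fun u hu => if_neg hu⟩
  rw [hf]
  exact lap3_diagonal_mul_zpow_eq_zero antiperiodic_neg_one_zpow three_add_two_sqrt_two_add_inv u
end
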